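/- Let 2 ≤ k ≤ 2n−2 and gcd(s,2n)=1, with γ ∈ F_{q^{2n}} such that N_{q^{2n}/q}(γ) is a non-square in F_q. Then the right nucleus of the code D_{k,s}(γ), namely N_r(D) = { φ a linearized polynomial : φ ∘ f ∈ D for all f ∈ D }, equals { aX : a ∈ F_{q^n} }. -/

import Mathlib

/-- `φ : K → K` is (induced by) a `q`-linearized polynomial modulo `X^{q^n} - X`. -/
def IsLinPoly (q n : ℕ) {K : Type*} [Field K] (φ : K → K) : Prop :=
  ∃ a : Fin n → K, φ = fun x => ∑ i : Fin n, a i * x ^ q ^ (i : ℕ)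

/-- The code `D_{k,s}(γ)` as a set of `F_q`-linear maps on `F_{q^{2n}}`. -/
def DFun (q s n k : ℕ) {K : Type*} [Field K] (γ : K) : Set (K → K) :=
  {f | ∃ a b : K, a ^ q ^ n = a ∧ b ^ q ^ n = b ∧ ∃ c : ℕ → K,
    f = fun x => a * x + (∑ i ∈ Finset.Ioo 0 k, c i * x ^ q ^ (s * i))
      + γ * b * x ^ q ^ (s * k)}

/-! Write maps `K → K` as `σ`-polynomials `∑ⱼ Aⱼ X^{σʲ}` with `σ = X^{q^s}` and `j` modulo `2n`.
Since `gcd(s, 2n) = 1` the maps `x ↦ x^{σʲ}` are distinct characters of `Kˣ`, so by Artin's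
lemma the coefficients are unique. A right-nucleus element `φ` lies in `D` (compose with `X`),
so `φ = ∑_{j ≤ k} Aⱼ X^{σʲ}`. Composing with the monomial `u X^{σᵗ} ∈ D` (`0 < t < k`) shifts the
coefficients by `t`: for `t = 1` the coefficient `A_k` moves to position `k + 1`, forcing
`A_k = 0`; for `t = k - i` the coefficient at position `k` is `Aᵢ u^{σⁱ}`, which must lie in
`γ F_{q^n}` for every `u`; as `u^{σⁱ}` ranges over all of `K`, this forces `Aᵢ = 0`. -/

namespace FiniteField

open Polynomial in
theorem eq_of_forall_pow_eq_pow {K : Type*} [Field K] [Fintype K] {a b : ℕ}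
    (ha : a < Fintype.card K) (hb : b < Fintype.card K) (h : ∀ x : K, x ^ a = x ^ b) :
    a = b := by
  have hX : (X ^ a : K[X]) = X ^ b :=
    eq_of_natDegree_lt_card_of_eval_eq _ _ Function.injective_id (by simpa using h)
      (by simpa using max_lt ha hb)
  simpa using congrArg natDegree hX

section FrobeniusPowers

variable {K : Type*} [Field K] [Fintype K] {q N : ℕ}

theorem one_lt_of_card_eq_pow (hK : Fintype.card K = q ^ N) : 1 < q := by
  by_contra! hq
  have := hK ▸ Fintype.one_lt_card (α := K)
  exact this.not_ge (pow_le_one₀ (Nat.zero_le q) hq)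

theorem pos_of_card_eq_pow (hK : Fintype.card K = q ^ N) : 0 < N := by
  by_contra! hN
  have := hK ▸ Fintype.one_lt_card (α := K)
  simp_all

theorem pow_pow_mod (hK : Fintype.card K = q ^ N) (x : K) (m : ℕ) :
    x ^ q ^ (m % N) = x ^ q ^ m := by
  conv_rhs => rw [← Nat.mod_add_div m N, pow_add, pow_mul, pow_mul, ← hK,
    pow_card_pow]

theorem exists_pow_pow_eq (hK : Fintype.card K = q ^ N) (m : ℕ) (y : K) :
    ∃ u : K, u ^ q ^ m = y := by
  refine ⟨y ^ q ^ ((N - 1) * m), ?_⟩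
  have hN := pos_of_card_eq_pow hK
  rw [← pow_mul, ← pow_add, ← add_one_mul (N - 1), Nat.sub_one_add_one hN.ne', pow_mul, ← hK,
    pow_card_pow]

theorem linearIndependent_pow_pow {s : ℕ} (hK : Fintype.card K = q ^ N) (hs : s.Coprime N) :
    LinearIndependent K (fun j : Fin N => fun x : K => x ^ q ^ (s * j)) := by
  have hq := one_lt_of_card_eq_pow hK
  have hN := pos_of_card_eq_pow hK
  have hlt (j : Fin N) : q ^ (s * j % N) < Fintype.card K :=
    hK ▸ Nat.pow_lt_pow_right hq (Nat.mod_lt _ hN)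
  have hinj : Function.Injective fun j : Fin N => powMonoidHom (α := K) (q ^ (s * j % N)) := by
    intro i j hij
    have hexp := eq_of_forall_pow_eq_pow (hlt i) (hlt j)
      (fun x => DFunLike.congr_fun hij x)
    have hmod : (i : ℕ) ≡ j [MOD N] :=
      Nat.ModEq.cancel_left_of_coprime (Nat.coprime_comm.mp hs) (Nat.pow_right_injective hq hexp)
    exact Fin.ext (Nat.ModEq.eq_of_lt_of_lt hmod i.isLt j.isLt)
  have hfam : (fun j : Fin N => fun x : K => x ^ q ^ (s * j))
      = (fun f : K →* K => (f : K → K)) ∘ fun j : Fin N => powMonoidHom (q ^ (s * j % N)) := by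
    funext j x
    simp [pow_pow_mod hK]
  exact hfam ▸ (linearIndependent_monoidHom K K).comp _ hinj

end FrobeniusPowers

end FiniteField

open FiniteField

section SigmaPoly

variable {K : Type*} [Field K] {q s N : ℕ}

def sigmaPoly (q s : ℕ) (A : Fin N → K) : K → K :=
  fun x => ∑ j, A j * x ^ q ^ (s * j)

theorem sigmaPoly_injective [Fintype K] (hK : Fintype.card K = q ^ N) (hs : s.Coprime N) :
    Function.Injective (sigmaPoly q s : (Fin N → K) → K → K) := by
  have hcomb : sigmaPoly q s = Fintype.linearCombination K fun j : Fin N => fun x : K =>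
      x ^ q ^ (s * j) := by
    funext A x
    simp [sigmaPoly, Fintype.linearCombination_apply, Finset.sum_apply]
  rw [hcomb]
  exact (linearIndependent_pow_pow hK hs).fintypeLinearCombination_injective

theorem sigmaPoly_eq_of_forall_ne_zero [NeZero N] {A : Fin N → K} (hA : ∀ j ≠ 0, A j = 0) :
    sigmaPoly q s A = fun x => A 0 * x := by
  funext x
  rw [sigmaPoly, Finset.sum_eq_single 0 (fun j _ hj => by rw [hA j hj, zero_mul])
    (fun h => absurd (Finset.mem_univ 0) h)]
  simp

theorem sigmaPoly_comp_monomial [Fintype K] [NeZero N] (hK : Fintype.card K = q ^ N)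
    (A : Fin N → K) (t : Fin N) (u : K) :
    sigmaPoly q s A ∘ (fun x => u * x ^ q ^ (s * t))
      = sigmaPoly q s fun j => A (j - t) * u ^ q ^ (s * (j - t : Fin N)) := by
  funext x
  simp only [sigmaPoly, Function.comp_apply]
  conv_rhs => rw [← Equiv.sum_comp (Equiv.addRight t)]
  refine Finset.sum_congr rfl fun j _ => ?_
  have hexp : x ^ q ^ (s * t + s * j) = x ^ q ^ (s * (j + t : Fin N)) := by
    rw [← pow_pow_mod hK x (s * t + s * j), ← pow_pow_mod hK x (s * (j + t : Fin N)),
      Fin.val_add, Nat.mul_mod, Nat.mod_mod, ← Nat.mul_mod, mul_add, add_comm]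
  simp only [Equiv.coe_addRight, add_sub_cancel_right]
  rw [mul_pow, ← pow_mul, ← pow_add, hexp, mul_assoc]

end SigmaPoly

section DCode

variable {K : Type*} [Field K] {q s n k : ℕ} {γ : K}

theorem id_mem_DFun (hq : q ≠ 0) : (fun x : K => x) ∈ DFun q s n k γ :=
  ⟨1, 0, one_pow _, by simp [hq], fun _ => 0, by simp⟩

theorem monomial_mem_DFun (hq : q ≠ 0) {t : ℕ} (ht0 : 0 < t) (htk : t < k) (u : K) :
    (fun x : K => u * x ^ q ^ (s * t)) ∈ DFun q s n k γ :=
  ⟨0, 0, by simp [hq], by simp [hq], fun i => if i = t then u else 0, by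
    simp [ite_mul, Finset.sum_ite_eq', ht0, htk]⟩

theorem mul_left_comp_mem_DFun {a : K} (ha : a ^ q ^ n = a) {f : K → K}
    (hf : f ∈ DFun q s n k γ) : (fun x => a * x) ∘ f ∈ DFun q s n k γ := by
  obtain ⟨a', b, ha', hb, c, rfl⟩ := hf
  refine ⟨a * a', a * b, by rw [mul_pow, ha, ha'], by rw [mul_pow, ha, hb],
    fun i => a * c i, ?_⟩
  funext x
  simp only [Function.comp_apply, mul_add, Finset.mul_sum]
  ring_nf

theorem isLinPoly_mul_left {N : ℕ} (hN : 0 < N) (a : K) : IsLinPoly q N fun x => a * x :=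
  ⟨Pi.single ⟨0, hN⟩ a, by
    funext x
    simp [Pi.single_apply, ite_mul, Finset.sum_ite_eq']⟩

theorem exists_sigmaPoly_eq_of_mem_DFun {N : ℕ} [NeZero N] (hk0 : 0 < k) (hkN : k < N)
    {f : K → K} (hf : f ∈ DFun q s n k γ) :
    ∃ A : Fin N → K, f = sigmaPoly q s A ∧ A 0 ^ q ^ n = A 0 ∧
      (∃ b : K, b ^ q ^ n = b ∧ A ⟨k, hkN⟩ = γ * b) ∧ ∀ j : Fin N, k < j → A j = 0 := by
  obtain ⟨a, b, ha, hb, c, rfl⟩ := hf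
  let C : ℕ → K := fun i =>
    (if i = 0 then a else 0) + (if i ∈ Finset.Ioo 0 k then c i else 0) +
      if i = k then γ * b else 0
  refine ⟨fun j => C j, ?_, by simpa [C, hk0.ne] using ha, ⟨b, hb, by simp [C, hk0.ne']⟩,
    fun j hj => by simp [C, hj.ne', (hk0.trans hj).ne', not_lt.mpr hj.le]⟩
  funext x
  rw [sigmaPoly, Fin.sum_univ_eq_sum_range (fun i => C i * x ^ q ^ (s * i))]
  simp only [C, add_mul, Finset.sum_add_distrib, ite_mul, zero_mul, Finset.sum_ite_eq',
    Finset.sum_ite_mem, Finset.mem_range, NeZero.pos N, hkN, if_true]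
  rw [Finset.inter_eq_right.mpr fun i hi => Finset.mem_range.mpr
    ((Finset.mem_Ioo.mp hi).2.trans hkN)]
  simp

end DCode

section Nucleus

variable {K : Type*} [Field K] [Fintype K] {q s n k N : ℕ} [NeZero N] {γ : K} {A : Fin N → K}

theorem coeffs_shift_of_comp_mem (hK : Fintype.card K = q ^ N) (hs : s.Coprime N)
    (hk0 : 0 < k) (hkN : k < N) {t : Fin N} {u : K}
    (h : sigmaPoly q s A ∘ (fun x => u * x ^ q ^ (s * t)) ∈ DFun q s n k γ) :
    (∃ b : K, b ^ q ^ n = b ∧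
        A (⟨k, hkN⟩ - t) * u ^ q ^ (s * (⟨k, hkN⟩ - t : Fin N)) = γ * b) ∧
      ∀ j : Fin N, k < j → A (j - t) * u ^ q ^ (s * (j - t : Fin N)) = 0 := by
  obtain ⟨B, hB, -, hBk, hBtop⟩ := exists_sigmaPoly_eq_of_mem_DFun hk0 hkN h
  rw [sigmaPoly_comp_monomial hK] at hB
  obtain rfl := sigmaPoly_injective hK hs hB
  exact ⟨hBk, hBtop⟩

variable (hK : Fintype.card K = q ^ N) (hs : s.Coprime N)
  (hcomp : ∀ t : ℕ, 0 < t → t < k → ∀ u : K,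
    sigmaPoly q s A ∘ (fun x => u * x ^ q ^ (s * t)) ∈ DFun q s n k γ)
include hK hs hcomp

theorem coeff_top_eq_zero_of_comp_mem (hk : 1 < k) (hkN : k + 1 < N) :
    A ⟨k, by omega⟩ = 0 := by
  have h := (coeffs_shift_of_comp_mem hK hs (by omega) (by omega) (t := ⟨1, by omega⟩)
    (hcomp 1 one_pos hk 1)).2 ⟨k + 1, hkN⟩ (by simp)
  have hidx : (⟨k + 1, hkN⟩ - ⟨1, by omega⟩ : Fin N) = ⟨k, by omega⟩ :=
    Fin.ext (by rw [Fin.sub_val_of_le (by simp)]; simp)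
  simpa [hidx] using h

theorem coeff_mid_eq_zero_of_comp_mem (hn : 0 < n) (hnN : n < N) (hγ : γ ≠ 0) {i : ℕ}
    (hi0 : 0 < i) (hik : i < k) (hkN : k < N) : A ⟨i, by omega⟩ = 0 := by
  by_contra hA
  have hsub (y : K) : y ^ q ^ n = y := by
    obtain ⟨u, hu⟩ := exists_pow_pow_eq hK (s * i) (γ * y / A ⟨i, by omega⟩)
    obtain ⟨⟨b, hb, hAb⟩, -⟩ := coeffs_shift_of_comp_mem hK hs (hi0.trans hik) hkN
      (t := ⟨k - i, by omega⟩) (hcomp (k - i) (by omega) (by omega) u)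
    have hidx : (⟨k, hkN⟩ - ⟨k - i, by omega⟩ : Fin N) = ⟨i, by omega⟩ :=
      Fin.ext (by rw [Fin.sub_val_of_le (by simp)]; simp; omega)
    rw [hidx, hu, mul_div_cancel₀ _ hA] at hAb
    rwa [mul_left_cancel₀ hγ hAb]
  have hq := one_lt_of_card_eq_pow hK
  have hexp := eq_of_forall_pow_eq_pow (a := q ^ n) (b := q ^ 0)
    (hK ▸ Nat.pow_lt_pow_right hq hnN) (hK ▸ Nat.pow_lt_pow_right hq (hn.trans hnN))
    (by simpa using hsub)
  exact hn.ne' (Nat.pow_right_injective hq hexp)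

theorem eq_zero_of_comp_mem (hn : 0 < n) (hnN : n < N) (hγ : γ ≠ 0) (hk : 1 < k)
    (hkN : k + 1 < N) (hAtop : ∀ j : Fin N, k < j → A j = 0) (j : Fin N) (hj : j ≠ 0) :
    A j = 0 := by
  have hj0 : 0 < (j : ℕ) := Nat.pos_of_ne_zero (Fin.val_ne_zero_iff.mpr hj)
  rcases lt_trichotomy (j : ℕ) k with hjk | rfl | hjk
  · exact coeff_mid_eq_zero_of_comp_mem hK hs hcomp hn hnN hγ hj0 hjk (by omega)
  · exact coeff_top_eq_zero_of_comp_mem hK hs hcomp hk hkN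
  · exact hAtop j hjk

end Nucleus

/-- For `2 ≤ k ≤ 2n-2`, the right nucleus
`N_r(D_{k,s}(γ)) = { φ linearized : φ ∘ f ∈ D for all f ∈ D }` equals
`{ aX : a ∈ F_{q^n} }`. -/
theorem D_code_right_nucleus (q s n k : ℕ) (hn : 0 < n) (hs : Nat.Coprime s (2 * n))
    (hk1 : 2 ≤ k) (hk2 : k ≤ 2 * n - 2)
    (K : Type*) [Field K] [Fintype K] (hK : Fintype.card K = q ^ (2 * n))
    (γ : K)
    (hγ : ¬ ∃ z : K, z ^ q = z ∧ z ^ 2 = γ ^ (∑ i ∈ Finset.range (2 * n), q ^ i)) :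
    {φ : K → K | IsLinPoly q (2 * n) φ ∧
        ∀ f ∈ DFun q s n k γ, φ ∘ f ∈ DFun q s n k γ}
      = {φ : K → K | ∃ a : K, a ^ q ^ n = a ∧ φ = fun x => a * x} := by
  have hq : q ≠ 0 := (one_lt_of_card_eq_pow hK).ne_bot
  have hγ0 : γ ≠ 0 := by
    rintro rfl
    have hsum : ∑ i ∈ Finset.range (2 * n), q ^ i ≠ 0 :=
      (Finset.sum_pos (fun i _ => pow_pos (Nat.pos_of_ne_zero hq) i)
        (Finset.nonempty_range_iff.mpr (by omega))).ne'
    exact hγ ⟨0, by simp [hq], by simp [hsum]⟩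
  have : NeZero (2 * n) := ⟨by omega⟩
  ext φ
  constructor
  · rintro ⟨-, hD⟩
    have hφ : φ ∈ DFun q s n k γ := hD _ (id_mem_DFun hq)
    obtain ⟨A, rfl, hA0, -, hAtop⟩ :=
      exists_sigmaPoly_eq_of_mem_DFun (N := 2 * n) (by omega) (by omega) hφ
    refine ⟨A 0, hA0, sigmaPoly_eq_of_forall_ne_zero ?_⟩
    exact eq_zero_of_comp_mem hK hs (fun t ht0 htk u => hD _ (monomial_mem_DFun hq ht0 htk u))
      hn (by omega) hγ0 (by omega) (by omega) hAtop
  · rintro ⟨a, ha, rfl⟩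
    exact ⟨isLinPoly_mul_left (by omega) a, fun f hf => mul_left_comp_mem_DFun ha hf⟩
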